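/- arXiv:1902.07145 — 2 statements merged into one kernel-verified Lean document; each statement's English description precedes it below -/
import Mathlib

section
/- Let {W_i}_{i=1}^n be m-dimensional subspaces of F^k. If the family saturates the orthoplex bound, i.e., the minimal squared chordal distance min_{i≠j} d_c²(W_i, W_j) equals m(k−m)/k, then the family {W̄_i} obtained by tensoring with r×r unitaries (with W̄_i = col(L̄_i), L̄_i as in the tensor construction) also satisfies min_{i≠j} d_c²(W̄_i, W̄_j) = rm(rk−rm)/(rk), and conversely. -/
open Matrix Kronecker Pointwise

lemma kronecker_conjTranspose' {F : Type*} [RCLike F] {a b c d : Type*}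
    (A : Matrix a b F) (B : Matrix c d F) :
    (A ⊗ₖ B)ᴴ = Aᴴ ⊗ₖ Bᴴ := by
  ext ⟨i, j⟩ ⟨i', j'⟩
  simp [Matrix.conjTranspose_apply, Matrix.kroneckerMap_apply, mul_comm]

theorem tensor_orthoplex_saturation_iff {F : Type*} [RCLike F] {k m r n : ℕ}
    (hk : 0 < k) (hr : 0 < r) (hn : 2 ≤ n)
    (L : Fin n → Matrix (Fin k) (Fin m) F)
    (hL : ∀ i, (L i)ᴴ * L i = 1)
    (U : Fin n → Matrix (Fin r) (Fin r) F)
    (hU : ∀ i, (U i)ᴴ * U i = 1 ∧ U i * (U i)ᴴ = 1)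
    (Lbar : Fin n → Matrix (Fin k × Fin r) (Fin m × Fin r) F)
    (hLbar : ∀ i, Lbar i = L i ⊗ₖ U i) :
    sInf {x : ℝ | ∃ i j, i ≠ j ∧
        x = (m : ℝ) - RCLike.re (Matrix.trace ((L i)ᴴ * L j * (L j)ᴴ * L i))}
      = (m : ℝ) * ((k : ℝ) - (m : ℝ)) / (k : ℝ) ↔
    sInf {x : ℝ | ∃ i j, i ≠ j ∧
        x = ((r : ℝ) * m) - RCLike.re (Matrix.trace ((Lbar i)ᴴ * Lbar j * (Lbar j)ᴴ * Lbar i))}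
      = ((r : ℝ) * m) * ((r : ℝ) * k - (r : ℝ) * m) / ((r : ℝ) * k) := by
  have htr : ∀ i j, Matrix.trace ((Lbar i)ᴴ * Lbar j * (Lbar j)ᴴ * Lbar i)
      = (r : F) * Matrix.trace ((L i)ᴴ * L j * (L j)ᴴ * L i) := by
    intro i j
    rw [hLbar, hLbar, kronecker_conjTranspose', kronecker_conjTranspose',
      ← Matrix.mul_kronecker_mul, ← Matrix.mul_kronecker_mul, ← Matrix.mul_kronecker_mul,
      Matrix.trace_kronecker]
    have : (U i)ᴴ * U j * (U j)ᴴ * U i = 1 := by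
      rw [Matrix.mul_assoc ((U i)ᴴ) (U j), (hU j).2, Matrix.mul_one, (hU i).1]
    rw [this, Matrix.trace_one]
    simp [mul_comm]
  set S : Set ℝ := {x : ℝ | ∃ i j, i ≠ j ∧
      x = (m : ℝ) - RCLike.re (Matrix.trace ((L i)ᴴ * L j * (L j)ᴴ * L i))}
  have hset : {x : ℝ | ∃ i j, i ≠ j ∧
      x = ((r : ℝ) * m) - RCLike.re (Matrix.trace ((Lbar i)ᴴ * Lbar j * (Lbar j)ᴴ * Lbar i))}
      = (r : ℝ) • S := by
    ext x
    constructor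
    · rintro ⟨i, j, hij, rfl⟩
      refine ⟨(m : ℝ) - RCLike.re (Matrix.trace ((L i)ᴴ * L j * (L j)ᴴ * L i)),
        ⟨i, j, hij, rfl⟩, ?_⟩
      rw [htr]
      push_cast [RCLike.mul_re]
      simp [mul_sub]
    · rintro ⟨y, ⟨i, j, hij, rfl⟩, rfl⟩
      refine ⟨i, j, hij, ?_⟩
      rw [htr]
      push_cast [RCLike.mul_re]
      simp [mul_sub, smul_eq_mul]
  rw [hset, Real.sInf_smul_of_nonneg (by positivity)]
  have hr' : (0:ℝ) < r := by exact_mod_cast hr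
  have hk' : (0:ℝ) < k := by exact_mod_cast hk
  have hrhs : ((r : ℝ) * m) * ((r : ℝ) * k - (r : ℝ) * m) / ((r : ℝ) * k)
      = (r : ℝ) * ((m : ℝ) * ((k : ℝ) - (m : ℝ)) / (k : ℝ)) := by
    field_simp
  rw [hrhs, smul_eq_mul]
  constructor
  · intro h; rw [h]
  · intro h; exact mul_left_cancel₀ (ne_of_gt hr') h
end

section
/- Let {W_i}_{i=1}^n ⊂ Gr(F,k,m) with projections P_i. Then min_{i≠j} d_c²(W_i, W_j) ≤ m(k−m)n/(k(n−1)), where d_c²(W_i,W_j) = m − tr(P_i P_j). Moreover, equality holds if and only if {W_i} is an equichordal tight fusion frame, i.e., tr(P_i P_j) is constant for i ≠ j and Σ_i P_i = (nm/k)·I_k. -/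
/-!
Put `S = ∑ i, P i`. Since each `P i` is idempotent of trace `m`,
`∑_{i ≠ j} tr (P i * P j) = tr (S * S) - n * m`, so the average of the chordal distances
`m - tr (P i * P j)` over the `n (n - 1)` ordered pairs `i ≠ j` is an affine, decreasing
function of `tr (S * S)`. Cauchy–Schwarz against the identity gives
`(tr S) ^ 2 ≤ k * tr (S * S)`, with equality iff `S` is scalar; as `tr S = n * m`, this bounds
the average by the simplex bound. The minimum is at most the average, with equality iff all
distances agree.
-/

open Matrix
open scoped BigOperators

namespace Finset

theorem inf'_le_sum_div_card {ι : Type*} {s : Finset ι} (hs : s.Nonempty) (f : ι → ℝ) :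
    s.inf' hs f ≤ (∑ i ∈ s, f i) / #s := by
  rw [← expect_eq_sum_div_card]
  exact le_expect hs fun i hi => inf'_le f hi

theorem inf'_eq_sum_div_card_iff {ι : Type*} {s : Finset ι} (hs : s.Nonempty) (f : ι → ℝ) :
    s.inf' hs f = (∑ i ∈ s, f i) / #s ↔ ∃ c, ∀ i ∈ s, f i = c := by
  rw [← expect_eq_sum_div_card]
  constructor
  · intro h
    refine ⟨s.inf' hs f, fun i hi => ?_⟩
    have hexcess : 𝔼 j ∈ s, (f j - s.inf' hs f) = 0 := by
      rw [expect_sub_distrib, expect_const hs, h, sub_self]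
    have := (expect_eq_zero_iff_of_nonneg fun j hj => sub_nonneg.2 (inf'_le f hj)).1 hexcess i hi
    linarith
  · rintro ⟨c, hc⟩
    rw [inf'_congr hs rfl hc, inf'_const, expect_congr rfl hc, expect_const hs]

theorem sum_sum_eq_sum_add_sum_offDiag {ι M : Type*} [DecidableEq ι] [AddCommMonoid M]
    (s : Finset ι) (f : ι → ι → M) :
    ∑ i ∈ s, ∑ j ∈ s, f i j = ∑ i ∈ s, f i i + ∑ p ∈ s.offDiag, f p.1 p.2 := by
  rw [← sum_product', ← diag_union_offDiag, sum_union (disjoint_diag_offDiag _), sum_diag]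

end Finset

namespace Matrix

open scoped ComplexOrder

theorem re_trace_conjTranspose_mul_self_nonneg {m n F : Type*} [Fintype m] [Fintype n]
    [RCLike F] (A : Matrix m n F) : 0 ≤ RCLike.re (Aᴴ * A).trace :=
  (RCLike.nonneg_iff.1 (posSemidef_conjTranspose_mul_self A).trace_nonneg).1

theorem re_trace_conjTranspose_mul_self_eq_zero_iff {m n F : Type*} [Fintype m] [Fintype n]
    [RCLike F] (A : Matrix m n F) : RCLike.re (Aᴴ * A).trace = 0 ↔ A = 0 := by
  obtain ⟨-, him⟩ := RCLike.nonneg_iff.1 (posSemidef_conjTranspose_mul_self A).trace_nonneg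
  rw [← trace_conjTranspose_mul_self_eq_zero_iff, ← RCLike.re_add_im (Aᴴ * A).trace, him]
  simp

section Hermitian

variable {ι F : Type*} [Fintype ι] [DecidableEq ι] [RCLike F]

theorem IsHermitian.re_trace_sub_smul_one_sq {S : Matrix ι ι F} (hS : S.IsHermitian) (c : ℝ) :
    RCLike.re ((S - (c : F) • 1)ᴴ * (S - (c : F) • 1)).trace
      = RCLike.re (S * S).trace - 2 * c * RCLike.re S.trace + c ^ 2 * Fintype.card ι := by
  rw [conjTranspose_sub, hS.eq, conjTranspose_smul, conjTranspose_one, RCLike.star_def,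
    RCLike.conj_ofReal]
  simp only [sub_mul, mul_sub, smul_mul_assoc, mul_smul_comm, one_mul, mul_one, trace_sub,
    trace_smul, trace_one, smul_eq_mul, map_sub, RCLike.re_ofReal_mul, RCLike.natCast_re]
  ring

theorem IsHermitian.card_mul_re_trace_mul_self_sub_sq [Nonempty ι] {S : Matrix ι ι F}
    (hS : S.IsHermitian) :
    Fintype.card ι * RCLike.re (S * S).trace - RCLike.re S.trace ^ 2 =
      Fintype.card ι * RCLike.re ((S - ((RCLike.re S.trace / Fintype.card ι : ℝ) : F) • 1)ᴴ *
        (S - ((RCLike.re S.trace / Fintype.card ι : ℝ) : F) • 1)).trace := by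
  have hcard : (Fintype.card ι : ℝ) ≠ 0 := Nat.cast_ne_zero.2 Fintype.card_ne_zero
  rw [hS.re_trace_sub_smul_one_sq]
  field_simp
  ring

theorem IsHermitian.sq_re_trace_le [Nonempty ι] {S : Matrix ι ι F} (hS : S.IsHermitian) :
    RCLike.re S.trace ^ 2 ≤ Fintype.card ι * RCLike.re (S * S).trace := by
  rw [← sub_nonneg, hS.card_mul_re_trace_mul_self_sub_sq]
  exact mul_nonneg (Nat.cast_nonneg _) (re_trace_conjTranspose_mul_self_nonneg _)

theorem IsHermitian.sq_re_trace_eq_iff [Nonempty ι] {S : Matrix ι ι F} (hS : S.IsHermitian) :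
    RCLike.re S.trace ^ 2 = Fintype.card ι * RCLike.re (S * S).trace ↔
      S = ((RCLike.re S.trace / Fintype.card ι : ℝ) : F) • 1 := by
  rw [← sub_eq_zero (a := S), ← re_trace_conjTranspose_mul_self_eq_zero_iff, eq_comm,
    ← sub_eq_zero, hS.card_mul_re_trace_mul_self_sub_sq, mul_eq_zero]
  simp [Fintype.card_ne_zero]

end Hermitian

section Idempotent

open Finset

variable {ι κ F : Type*} [Fintype ι] [Fintype κ] [RCLike F] {m : ℕ} (P : ι → Matrix κ κ F)

theorem sum_offDiag_re_trace_mul_of_idempotent [DecidableEq ι] (hidem : ∀ i, P i * P i = P i)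
    (htr : ∀ i, (P i).trace = m) :
    ∑ p ∈ univ.offDiag, RCLike.re (P p.1 * P p.2).trace =
      RCLike.re ((∑ i, P i) * ∑ i, P i).trace - Fintype.card ι * m := by
  rw [sum_mul_sum, trace_sum, map_sum]
  simp only [trace_sum, map_sum, sum_sum_eq_sum_add_sum_offDiag, hidem, htr, RCLike.natCast_re,
    sum_const, card_univ, nsmul_eq_mul]
  ring

theorem re_trace_sum_eq_card_mul (htr : ∀ i, (P i).trace = m) :
    RCLike.re (∑ i, P i).trace = Fintype.card ι * m := by
  simp [trace_sum, htr]

theorem sq_card_mul_le_re_trace_sum_mul_sum [DecidableEq κ] [Nonempty κ]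
    (hherm : ∀ i, (P i).IsHermitian) (htr : ∀ i, (P i).trace = m) :
    ((Fintype.card ι : ℝ) * m) ^ 2 ≤ Fintype.card κ * RCLike.re ((∑ i, P i) * ∑ i, P i).trace := by
  rw [← re_trace_sum_eq_card_mul P htr]
  exact (isSelfAdjoint_sum univ fun i _ => (hherm i).isSelfAdjoint).isHermitian.sq_re_trace_le

theorem sq_card_mul_eq_re_trace_sum_mul_sum_iff [DecidableEq κ] [Nonempty κ]
    (hherm : ∀ i, (P i).IsHermitian) (htr : ∀ i, (P i).trace = m) :
    ((Fintype.card ι : ℝ) * m) ^ 2 = Fintype.card κ * RCLike.re ((∑ i, P i) * ∑ i, P i).trace ↔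
      ∑ i, P i = ((Fintype.card ι * m / Fintype.card κ : ℝ) : F) • 1 := by
  rw [← re_trace_sum_eq_card_mul P htr]
  exact (isSelfAdjoint_sum univ fun i _ => (hherm i).isSelfAdjoint).isHermitian.sq_re_trace_eq_iff

theorem sum_offDiag_sub_re_trace_mul_div_card [DecidableEq ι] [Nonempty κ]
    (hidem : ∀ i, P i * P i = P i) (htr : ∀ i, (P i).trace = m) (hι : 2 ≤ Fintype.card ι) :
    (∑ p ∈ univ.offDiag, (m - RCLike.re (P p.1 * P p.2).trace)) / #(univ : Finset ι).offDiag =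
      m * (Fintype.card κ - m) * Fintype.card ι / (Fintype.card κ * (Fintype.card ι - 1)) -
        (Fintype.card κ * RCLike.re ((∑ i, P i) * ∑ i, P i).trace - (Fintype.card ι * m) ^ 2) /
          (Fintype.card κ * (Fintype.card ι * (Fintype.card ι - 1))) := by
  have hk : (Fintype.card κ : ℝ) ≠ 0 := Nat.cast_ne_zero.2 Fintype.card_ne_zero
  have hn : (Fintype.card ι : ℝ) - 1 ≠ 0 := by
    rw [sub_ne_zero]; exact_mod_cast (by omega : Fintype.card ι ≠ 1)
  have hn' : (Fintype.card ι : ℝ) ≠ 0 := by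
    exact_mod_cast (by omega : Fintype.card ι ≠ 0)
  rw [sum_sub_distrib, sum_const, nsmul_eq_mul, sum_offDiag_re_trace_mul_of_idempotent P hidem htr,
    offDiag_card, card_univ, Nat.cast_sub (Nat.le_mul_self _)]
  push_cast
  field_simp
  ring

theorem sum_offDiag_sub_re_trace_mul_div_card_le [DecidableEq ι] [DecidableEq κ] [Nonempty κ]
    (hherm : ∀ i, (P i).IsHermitian) (hidem : ∀ i, P i * P i = P i)
    (htr : ∀ i, (P i).trace = m) (hι : 2 ≤ Fintype.card ι) :
    (∑ p ∈ univ.offDiag, (m - RCLike.re (P p.1 * P p.2).trace)) / #(univ : Finset ι).offDiag ≤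
      m * (Fintype.card κ - m) * Fintype.card ι / (Fintype.card κ * (Fintype.card ι - 1)) := by
  rw [sum_offDiag_sub_re_trace_mul_div_card P hidem htr hι, sub_le_self_iff]
  have : (1 : ℝ) ≤ Fintype.card ι - 1 := by
    rw [le_sub_iff_add_le]; exact_mod_cast (by omega : 1 + 1 ≤ Fintype.card ι)
  exact div_nonneg (sub_nonneg.2 (sq_card_mul_le_re_trace_sum_mul_sum P hherm htr)) (by positivity)

theorem sum_offDiag_sub_re_trace_mul_div_card_eq_iff [DecidableEq ι] [DecidableEq κ] [Nonempty κ]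
    (hherm : ∀ i, (P i).IsHermitian) (hidem : ∀ i, P i * P i = P i)
    (htr : ∀ i, (P i).trace = m) (hι : 2 ≤ Fintype.card ι) :
    (∑ p ∈ univ.offDiag, (m - RCLike.re (P p.1 * P p.2).trace)) / #(univ : Finset ι).offDiag =
      m * (Fintype.card κ - m) * Fintype.card ι / (Fintype.card κ * (Fintype.card ι - 1)) ↔
      ∑ i, P i = ((Fintype.card ι * m / Fintype.card κ : ℝ) : F) • 1 := by
  have : (1 : ℝ) ≤ Fintype.card ι - 1 := by
    rw [le_sub_iff_add_le]; exact_mod_cast (by omega : 1 + 1 ≤ Fintype.card ι)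
  rw [sum_offDiag_sub_re_trace_mul_div_card P hidem htr hι, sub_eq_self, div_eq_zero_iff,
    or_iff_left (by positivity), sub_eq_zero, eq_comm,
    sq_card_mul_eq_re_trace_sum_mul_sum_iff P hherm htr]

end Idempotent

end Matrix

open Finset in
theorem simplex_bound {F : Type*} [RCLike F] {k m n : ℕ}
    (hk : 0 < k) (hn : 2 ≤ n)
    (P : Fin n → Matrix (Fin k) (Fin k) F)
    (hproj : ∀ i, (P i)ᴴ = P i ∧ P i * P i = P i)
    (htr : ∀ i, Matrix.trace (P i) = (m : F)) :
    sInf {x : ℝ | ∃ i j, i ≠ j ∧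
        x = (m : ℝ) - RCLike.re (Matrix.trace (P i * P j))}
      ≤ (m : ℝ) * ((k : ℝ) - m) * n / ((k : ℝ) * ((n : ℝ) - 1)) ∧
    (sInf {x : ℝ | ∃ i j, i ≠ j ∧
        x = (m : ℝ) - RCLike.re (Matrix.trace (P i * P j))}
      = (m : ℝ) * ((k : ℝ) - m) * n / ((k : ℝ) * ((n : ℝ) - 1)) ↔
      ((∃ c : ℝ, ∀ i j, i ≠ j → RCLike.re (Matrix.trace (P i * P j)) = c) ∧
        (∑ i, P i) = (((n : ℝ) * m / k : ℝ) : F) • 1)) := by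
  set d : Fin n × Fin n → ℝ := fun p => m - RCLike.re (P p.1 * P p.2).trace
  have : Nonempty (Fin k) := ⟨⟨0, hk⟩⟩
  have hne : (univ : Finset (Fin n)).offDiag.Nonempty :=
    ⟨(⟨0, by omega⟩, ⟨1, by omega⟩), by simp [Fin.ext_iff]⟩
  have hset : {x : ℝ | ∃ i j, i ≠ j ∧ x = (m : ℝ) - RCLike.re (P i * P j).trace} =
      d '' ↑(univ.offDiag : Finset (Fin n × Fin n)) := by
    ext x; simp [d, eq_comm]
  have hcard : 2 ≤ Fintype.card (Fin n) := by simpa using hn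
  have havg_le := sum_offDiag_sub_re_trace_mul_div_card_le P (fun i => (hproj i).1)
    (fun i => (hproj i).2) htr hcard
  have havg_eq := sum_offDiag_sub_re_trace_mul_div_card_eq_iff P (fun i => (hproj i).1)
    (fun i => (hproj i).2) htr hcard
  simp only [Fintype.card_fin] at havg_le havg_eq
  have hmin := inf'_le_sum_div_card hne d
  rw [hset, ← inf'_eq_csInf_image _ hne]
  refine ⟨hmin.trans havg_le, fun h => ?_, fun ⟨⟨c, hc⟩, hSc⟩ => ?_⟩
  · have hmin_eq := le_antisymm hmin (h ▸ havg_le)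
    obtain ⟨c, hc⟩ := (inf'_eq_sum_div_card_iff hne d).1 hmin_eq
    refine ⟨⟨m - c, fun i j hij => ?_⟩, havg_eq.1 (hmin_eq ▸ h)⟩
    linarith [show d (i, j) = c from hc (i, j) (by simpa using hij)]
  · have hconst : ∀ p ∈ univ.offDiag, d p = m - c := fun p hp => by
      simp only [d, hc p.1 p.2 (by simpa using hp)]
    rw [(inf'_eq_sum_div_card_iff hne d).2 ⟨_, hconst⟩, havg_eq.2 hSc]
end
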